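/- If E is a (possibly non-finite) directed graph, R is an associative unital ring, G is a group, and L_R(E) is equipped with any standard G-gradation S = ⊕_{g∈G} S_g, then L_R(E) is nearly epsilon-strongly G-graded: for every g ∈ G and every s ∈ S_g it holds that s ∈ (S_g S_{g⁻¹}) s and s ∈ s (S_{g⁻¹} S_g). -/

import Mathlib

namespace LPA

/-- Generators of the Leavitt path algebra: a vertex `v`, a (real) edge `f`,
or a ghost edge `f*`. -/
inductive Gen (V Ed : Type*) : Type _
  | vertex : V → Gen V Ed
  | edge : Ed → Gen V Ed
  | ghost : Ed → Gen V Ed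

/-- The free `R`-ring on the generators, with `R` commuting with the generators. -/
abbrev FreeLPA (R V Ed : Type*) [Ring R] : Type _ := MonoidAlgebra R (FreeMonoid (Gen V Ed))

noncomputable def genF (R : Type*) [Ring R] {V Ed : Type*} (x : Gen V Ed) : FreeLPA R V Ed :=
  MonoidAlgebra.of R (FreeMonoid (Gen V Ed)) (FreeMonoid.of x)

/-- The defining relations of the Leavitt path algebra of the graph with vertices `V`,
edges `Ed`, source map `sf` and range map `rf`. -/
inductive Rel (R : Type*) [Ring R] {V Ed : Type*} (sf rf : Ed → V) :
    FreeLPA R V Ed → FreeLPA R V Ed → Prop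
  | vertex_eq (v : V) :
      Rel R sf rf (genF R (Gen.vertex v) * genF R (Gen.vertex v)) (genF R (Gen.vertex v))
  | vertex_ne {v w : V} (h : v ≠ w) :
      Rel R sf rf (genF R (Gen.vertex v) * genF R (Gen.vertex w)) 0
  | src_edge (f : Ed) :
      Rel R sf rf (genF R (Gen.vertex (sf f)) * genF R (Gen.edge f)) (genF R (Gen.edge f))
  | edge_rng (f : Ed) :
      Rel R sf rf (genF R (Gen.edge f) * genF R (Gen.vertex (rf f))) (genF R (Gen.edge f))
  | rng_ghost (f : Ed) :
      Rel R sf rf (genF R (Gen.vertex (rf f)) * genF R (Gen.ghost f)) (genF R (Gen.ghost f))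
  | ghost_src (f : Ed) :
      Rel R sf rf (genF R (Gen.ghost f) * genF R (Gen.vertex (sf f))) (genF R (Gen.ghost f))
  | ghost_edge_eq (f : Ed) :
      Rel R sf rf (genF R (Gen.ghost f) * genF R (Gen.edge f)) (genF R (Gen.vertex (rf f)))
  | ghost_edge_ne {f f' : Ed} (h : f ≠ f') :
      Rel R sf rf (genF R (Gen.ghost f) * genF R (Gen.edge f')) 0
  | cuntz_krieger (v : V) (h1 : {f : Ed | sf f = v}.Nonempty) (h2 : {f : Ed | sf f = v}.Finite) :
      Rel R sf rf (∑ f ∈ h2.toFinset, genF R (Gen.edge f) * genF R (Gen.ghost f))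
        (genF R (Gen.vertex v))

/-- The Leavitt path algebra `L_R(E)` (as the ambient unital quotient ring in which the
span of the monomials `α β*` is the Leavitt path algebra). -/
abbrev LeavittPathAlgebra (R : Type*) [Ring R] {V Ed : Type*} (sf rf : Ed → V) : Type _ :=
  RingQuot (Rel R sf rf)

noncomputable def gen (R : Type*) [Ring R] {V Ed : Type*} (sf rf : Ed → V) (x : Gen V Ed) :
    LeavittPathAlgebra R sf rf :=
  RingQuot.mkRingHom (Rel R sf rf) (genF R x)

noncomputable def ofR (R : Type*) [Ring R] {V Ed : Type*} (sf rf : Ed → V) (r : R) :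
    LeavittPathAlgebra R sf rf :=
  RingQuot.mkRingHom (Rel R sf rf) (MonoidAlgebra.single (1 : FreeMonoid (Gen V Ed)) r)

/-- Paths in the directed graph. `GPath sf rf u w` are the paths with source `u`
and range `w`; a vertex is a path of length `0`. -/
inductive GPath {V Ed : Type*} (sf rf : Ed → V) : V → V → Type _
  | nil (v : V) : GPath sf rf v v
  | cons (f : Ed) {w : V} (p : GPath sf rf (rf f) w) : GPath sf rf (sf f) w

namespace GPath

def length {V Ed : Type*} {sf rf : Ed → V} : {u w : V} → GPath sf rf u w → ℕ
  | _, _, nil _ => 0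
  | _, _, cons _ p => length p + 1

def edgeList {V Ed : Type*} {sf rf : Ed → V} : {u w : V} → GPath sf rf u w → List Ed
  | _, _, nil _ => []
  | _, _, cons f p => f :: edgeList p

/-- The degree of a path with respect to a degree map `dg : Ed → G`. -/
def degree {V Ed : Type*} {sf rf : Ed → V} {G : Type*} [Group G] (dg : Ed → G) :
    {u w : V} → GPath sf rf u w → G
  | _, _, nil _ => 1
  | _, _, cons f p => dg f * degree dg p

end GPath

/-- The element `α` of `L_R(E)` associated to a path `α` (a vertex if `α` has length 0). -/
noncomputable def realElem (R : Type*) [Ring R] {V Ed : Type*} (sf rf : Ed → V) :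
    {u w : V} → GPath sf rf u w → LeavittPathAlgebra R sf rf
  | _, _, .nil v => gen R sf rf (Gen.vertex v)
  | _, _, .cons f p => gen R sf rf (Gen.edge f) * realElem R sf rf p

/-- The element `α* = α_n* ⋯ α_1*` of `L_R(E)` associated to a path `α`. -/
noncomputable def ghostElem (R : Type*) [Ring R] {V Ed : Type*} (sf rf : Ed → V) :
    {u w : V} → GPath sf rf u w → LeavittPathAlgebra R sf rf
  | _, _, .nil v => gen R sf rf (Gen.vertex v)
  | _, _, .cons f p => ghostElem R sf rf p * gen R sf rf (Gen.ghost f)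

/-- The product `AB` of two additive subgroups of a ring: the additive subgroup
generated by all products `ab`, `a ∈ A`, `b ∈ B`. -/
def sgMul {A : Type*} [NonUnitalRing A] (B C : AddSubgroup A) : AddSubgroup A :=
  AddSubgroup.closure {x | ∃ b ∈ B, ∃ c ∈ C, x = b * c}

/-- The homogeneous component `S_g` of the standard `G`-gradation of `L_R(E)` attached
to the degree map `dg : Ed → G`: the `R`-span of the monomials `α β*` with
`r(α) = r(β)` and `deg α * (deg β)⁻¹ = g`. -/
noncomputable def component (R : Type*) [Ring R] {V Ed : Type*} (sf rf : Ed → V) {G : Type*} [Group G]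
    (dg : Ed → G) (g : G) : AddSubgroup (LeavittPathAlgebra R sf rf) :=
  AddSubgroup.closure
    {x | ∃ (r : R) (u u' w : V) (α : GPath sf rf u w) (β : GPath sf rf u' w),
      α.degree dg * (β.degree dg)⁻¹ = g ∧
      x = ofR R sf rf r * (realElem R sf rf α * ghostElem R sf rf β)}

/-- The homogeneous component `S_n` of the canonical `ℤ`-gradation of `L_R(E)`:
the `R`-span of the monomials `α β*` with `r(α) = r(β)` and `l(α) - l(β) = n`. -/
noncomputable def componentZ (R : Type*) [Ring R] {V Ed : Type*} (sf rf : Ed → V) (n : ℤ) :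
    AddSubgroup (LeavittPathAlgebra R sf rf) :=
  AddSubgroup.closure
    {x | ∃ (r : R) (u u' w : V) (α : GPath sf rf u w) (β : GPath sf rf u' w),
      (α.length : ℤ) - (β.length : ℤ) = n ∧
      x = ofR R sf rf r * (realElem R sf rf α * ghostElem R sf rf β)}

end LPA

/-!
Every element of `S_g` is a finite sum of monomials `r α β*`, and such a monomial is fixed on the
left by the idempotent `α α* = (α β*)(β α*) ∈ S_g S_{g⁻¹}` and on the right by `β β*`. For two
paths `γ, γ'` the idempotents `γ γ*` and `γ' γ'*` commute, and their product is `0` unless one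
path is a prefix of the other, in which case it is the idempotent of the longer path. So these
idempotents span a commutative ring without unit, in which local units combine: if `e a = a` and
`e' b = b`, then `e + e' - e e'` fixes both `a` and `b`.
-/

namespace AddSubgroup

variable {A : Type*} [NonUnitalRing A]

theorem commute_of_mem_closure {P : Set A} (hP : ∀ x ∈ P, ∀ y ∈ P, Commute x y) {a b : A}
    (ha : a ∈ closure P) (hb : b ∈ closure P) : Commute a b := by
  induction ha, hb using closure_induction₂ with
  | mem x y hx hy => exact hP x hx y hy
  | zero_left => exact Commute.zero_left _
  | zero_right => exact Commute.zero_right _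
  | add_left _ _ _ _ _ _ h₁ h₂ => exact h₁.add_left h₂
  | add_right _ _ _ _ _ _ h₁ h₂ => exact h₁.add_right h₂
  | neg_left _ _ _ _ h => exact h.neg_left
  | neg_right _ _ _ _ h => exact h.neg_right

theorem mul_mem_closure {P : Set A} (hP : ∀ x ∈ P, ∀ y ∈ P, x * y ∈ closure P) {a b : A}
    (ha : a ∈ closure P) (hb : b ∈ closure P) : a * b ∈ closure P := by
  induction ha, hb using closure_induction₂ with
  | mem x y hx hy => exact hP x hx y hy
  | zero_left => simp
  | zero_right => simp
  | add_left _ _ _ _ _ _ h₁ h₂ => simpa [add_mul] using add_mem h₁ h₂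
  | add_right _ _ _ _ _ _ h₁ h₂ => simpa [mul_add] using add_mem h₁ h₂
  | neg_left _ _ _ _ h => simpa using neg_mem h
  | neg_right _ _ _ _ h => simpa using neg_mem h

theorem exists_mul_left_eq_self_of_mem_closure {H : AddSubgroup A}
    (hmul : ∀ x ∈ H, ∀ y ∈ H, x * y ∈ H) (hcomm : ∀ x ∈ H, ∀ y ∈ H, Commute x y)
    {M : Set A} (hM : ∀ m ∈ M, ∃ e ∈ H, e * m = m) {s : A}
    (hs : s ∈ closure M) : ∃ e ∈ H, e * s = s := by
  induction hs using closure_induction with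
  | mem m hm => exact hM m hm
  | zero => exact ⟨0, zero_mem _, mul_zero 0⟩
  | add a b _ _ iha ihb =>
    obtain ⟨e, he, hea⟩ := iha
    obtain ⟨e', he', heb⟩ := ihb
    refine ⟨e + e' - e * e', sub_mem (add_mem he he') (hmul e he e' he'), ?_⟩
    have hfa : (e + e' - e * e') * a = a := by
      rw [sub_mul, add_mul, hea, (hcomm e he e' he').eq, mul_assoc, hea, add_sub_cancel_right]
    have hfb : (e + e' - e * e') * b = b := by
      rw [sub_mul, add_mul, mul_assoc, heb, add_sub_cancel_left]
    rw [mul_add, hfa, hfb]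
  | neg a _ iha =>
    obtain ⟨e, he, hea⟩ := iha
    exact ⟨e, he, by rw [mul_neg, hea]⟩

theorem exists_mul_right_eq_self_of_mem_closure {H : AddSubgroup A}
    (hmul : ∀ x ∈ H, ∀ y ∈ H, x * y ∈ H) (hcomm : ∀ x ∈ H, ∀ y ∈ H, Commute x y)
    {M : Set A} (hM : ∀ m ∈ M, ∃ e ∈ H, m * e = m) {s : A}
    (hs : s ∈ closure M) : ∃ e ∈ H, s * e = s := by
  induction hs using closure_induction with
  | mem m hm => exact hM m hm
  | zero => exact ⟨0, zero_mem _, zero_mul 0⟩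
  | add a b _ _ iha ihb =>
    obtain ⟨e, he, hae⟩ := iha
    obtain ⟨e', he', hbe'⟩ := ihb
    refine ⟨e + e' - e * e', sub_mem (add_mem he he') (hmul e he e' he'), ?_⟩
    have haf : a * (e + e' - e * e') = a := by
      rw [mul_sub, mul_add, hae, ← mul_assoc, hae, add_sub_cancel_right]
    have hbf : b * (e + e' - e * e') = b := by
      rw [mul_sub, mul_add, hbe', (hcomm e he e' he').eq, ← mul_assoc, hbe', add_sub_cancel_left]
    rw [add_mul, haf, hbf]
  | neg a _ iha =>
    obtain ⟨e, he, hae⟩ := iha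
    exact ⟨e, he, by rw [neg_mul, hae]⟩

end AddSubgroup

namespace LPA

variable {R : Type*} [Ring R] {V Ed : Type*} {sf rf : Ed → V}

theorem gen_mul_gen_of_rel {x y : Gen V Ed} {b : FreeLPA R V Ed}
    (h : Rel R sf rf (genF R x * genF R y) b) :
    gen R sf rf x * gen R sf rf y = RingQuot.mkRingHom (Rel R sf rf) b := by
  rw [gen, gen, ← map_mul]
  exact RingQuot.mkRingHom_rel h

theorem vertex_mul_self (v : V) :
    gen R sf rf (.vertex v) * gen R sf rf (.vertex v) = gen R sf rf (.vertex v) :=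
  gen_mul_gen_of_rel (.vertex_eq v)

theorem vertex_mul_vertex_of_ne {v w : V} (h : v ≠ w) :
    gen R sf rf (.vertex v) * gen R sf rf (.vertex w) = 0 := by
  rw [gen_mul_gen_of_rel (.vertex_ne h), map_zero]

theorem vertex_mul_edge (f : Ed) :
    gen R sf rf (.vertex (sf f)) * gen R sf rf (.edge f) = gen R sf rf (.edge f) :=
  gen_mul_gen_of_rel (.src_edge f)

theorem ghost_mul_vertex (f : Ed) :
    gen R sf rf (.ghost f) * gen R sf rf (.vertex (sf f)) = gen R sf rf (.ghost f) :=
  gen_mul_gen_of_rel (.ghost_src f)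

theorem ghost_mul_edge_self (f : Ed) :
    gen R sf rf (.ghost f) * gen R sf rf (.edge f) = gen R sf rf (.vertex (rf f)) :=
  gen_mul_gen_of_rel (.ghost_edge_eq f)

theorem ghost_mul_edge_of_ne {f f' : Ed} (h : f ≠ f') :
    gen R sf rf (.ghost f) * gen R sf rf (.edge f') = 0 := by
  rw [gen_mul_gen_of_rel (.ghost_edge_ne h), map_zero]

theorem vertex_mul_edge_of_ne {v : V} {f : Ed} (h : v ≠ sf f) :
    gen R sf rf (.vertex v) * gen R sf rf (.edge f) = 0 := by
  rw [← vertex_mul_edge f, ← mul_assoc, vertex_mul_vertex_of_ne h, zero_mul]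

theorem ghost_mul_vertex_of_ne {v : V} {f : Ed} (h : v ≠ sf f) :
    gen R sf rf (.ghost f) * gen R sf rf (.vertex v) = 0 := by
  rw [← ghost_mul_vertex f, mul_assoc, vertex_mul_vertex_of_ne (Ne.symm h), mul_zero]

theorem commute_ofR_gen (r : R) (x : Gen V Ed) : Commute (ofR R sf rf r) (gen R sf rf x) := by
  rw [Commute, SemiconjBy, ofR, gen, genF, ← map_mul, ← map_mul, MonoidAlgebra.of_apply,
    MonoidAlgebra.single_mul_single, MonoidAlgebra.single_mul_single, one_mul, mul_one, one_mul,
    mul_one]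

theorem ofR_one : ofR R sf rf (1 : R) = 1 := by
  rw [ofR, ← MonoidAlgebra.one_def, map_one]

theorem vertex_mul_realElem {u w : V} (p : GPath sf rf u w) :
    gen R sf rf (.vertex u) * realElem R sf rf p = realElem R sf rf p := by
  cases p with
  | nil => exact vertex_mul_self _
  | cons f p => rw [realElem, ← mul_assoc, vertex_mul_edge]

theorem vertex_mul_realElem_of_ne {u w v : V} (h : v ≠ u) (p : GPath sf rf u w) :
    gen R sf rf (.vertex v) * realElem R sf rf p = 0 := by
  cases p with
  | nil => exact vertex_mul_vertex_of_ne h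
  | cons f p => rw [realElem, ← mul_assoc, vertex_mul_edge_of_ne h, zero_mul]

theorem realElem_mul_vertex {u w : V} (p : GPath sf rf u w) :
    realElem R sf rf p * gen R sf rf (.vertex w) = realElem R sf rf p := by
  induction p with
  | nil v => exact vertex_mul_self v
  | cons f p ih => rw [realElem, mul_assoc, ih]

theorem ghostElem_mul_vertex {u w : V} (p : GPath sf rf u w) :
    ghostElem R sf rf p * gen R sf rf (.vertex u) = ghostElem R sf rf p := by
  cases p with
  | nil => exact vertex_mul_self _
  | cons f p => rw [ghostElem, mul_assoc, ghost_mul_vertex]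

theorem ghostElem_mul_vertex_of_ne {u w v : V} (h : v ≠ u) (p : GPath sf rf u w) :
    ghostElem R sf rf p * gen R sf rf (.vertex v) = 0 := by
  cases p with
  | nil => exact vertex_mul_vertex_of_ne (Ne.symm h)
  | cons f p => rw [ghostElem, mul_assoc, ghost_mul_vertex_of_ne h, mul_zero]

theorem ghostElem_cons_mul_realElem_cons (f : Ed) {w w' : V} (p : GPath sf rf (rf f) w)
    (q : GPath sf rf (rf f) w') :
    ghostElem R sf rf (.cons f p) * realElem R sf rf (.cons f q) =
      ghostElem R sf rf p * realElem R sf rf q := by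
  rw [ghostElem, realElem, mul_assoc, ← mul_assoc (gen R sf rf (.ghost f)), ghost_mul_edge_self,
    vertex_mul_realElem]

theorem ghostElem_cons_mul_realElem_cons_of_ne {f f' : Ed} (h : f ≠ f') {w w' : V}
    (p : GPath sf rf (rf f) w) (q : GPath sf rf (rf f') w') :
    ghostElem R sf rf (.cons f p) * realElem R sf rf (.cons f' q) = 0 := by
  rw [ghostElem, realElem, mul_assoc, ← mul_assoc (gen R sf rf (.ghost f)), ghost_mul_edge_of_ne h,
    zero_mul, mul_zero]

theorem ghostElem_mul_realElem_self {u w : V} (p : GPath sf rf u w) :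
    ghostElem R sf rf p * realElem R sf rf p = gen R sf rf (.vertex w) := by
  induction p with
  | nil v => exact vertex_mul_self v
  | cons f p ih => rw [ghostElem_cons_mul_realElem_cons, ih]

theorem commute_ofR_realElem (r : R) {u w : V} (p : GPath sf rf u w) :
    Commute (ofR R sf rf r) (realElem R sf rf p) := by
  induction p with
  | nil v => exact commute_ofR_gen r _
  | cons f p ih => exact (commute_ofR_gen r _).mul_right ih

theorem commute_ofR_ghostElem (r : R) {u w : V} (p : GPath sf rf u w) :
    Commute (ofR R sf rf r) (ghostElem R sf rf p) := by
  induction p with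
  | nil v => exact commute_ofR_gen r _
  | cons f p ih => exact ih.mul_right (commute_ofR_gen r _)

/-- `p` is a prefix of `q`, recorded through the elements `q = p δ` and `q* = δ* p*` of `L_R(E)`,
which avoids comparing paths whose endpoints are only propositionally equal. -/
def IsPrefix (R : Type*) [Ring R] {u w u' w' : V} (p : GPath sf rf u w)
    (q : GPath sf rf u' w') : Prop :=
  ∃ δ : GPath sf rf w w', realElem R sf rf q = realElem R sf rf p * realElem R sf rf δ ∧
    ghostElem R sf rf q = ghostElem R sf rf δ * ghostElem R sf rf p

theorem isPrefix_cons {f : Ed} {w w' : V} {p : GPath sf rf (rf f) w} {q : GPath sf rf (rf f) w'}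
    (h : IsPrefix R p q) : IsPrefix R (.cons f p) (.cons f q) := by
  obtain ⟨δ, hreal, hghost⟩ := h
  exact ⟨δ, by rw [realElem, realElem, hreal, mul_assoc],
    by rw [ghostElem, ghostElem, hghost, mul_assoc]⟩

theorem isPrefix_nil {u w : V} (p : GPath sf rf u w) : IsPrefix R (.nil u) p :=
  ⟨p, (vertex_mul_realElem p).symm, (ghostElem_mul_vertex p).symm⟩

theorem ghostElem_mul_realElem_eq_zero_or_isPrefix {u w u' w' : V} (p : GPath sf rf u w)
    (q : GPath sf rf u' w') :
    (ghostElem R sf rf p * realElem R sf rf q = 0 ∧ ghostElem R sf rf q * realElem R sf rf p = 0)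
      ∨ IsPrefix R p q ∨ IsPrefix R q p := by
  induction p generalizing u' w' with
  | nil v =>
    by_cases h : v = u'
    · subst h
      exact .inr (.inl (isPrefix_nil q))
    · exact .inl ⟨vertex_mul_realElem_of_ne h q, ghostElem_mul_vertex_of_ne h q⟩
  | cons f p ih =>
    cases q with
    | nil =>
      by_cases h : u' = sf f
      · subst h
        exact .inr (.inr (isPrefix_nil _))
      · exact .inl ⟨ghostElem_mul_vertex_of_ne h _, vertex_mul_realElem_of_ne h _⟩
    | cons f' q =>
      by_cases h : f = f'
      · subst h
        simp only [ghostElem_cons_mul_realElem_cons]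
        exact (ih q).imp id (Or.imp isPrefix_cons isPrefix_cons)
      · exact .inl ⟨ghostElem_cons_mul_realElem_cons_of_ne h p q,
          ghostElem_cons_mul_realElem_cons_of_ne (Ne.symm h) q p⟩

noncomputable def pathProj (R : Type*) [Ring R] {u w : V} (p : GPath sf rf u w) :
    LeavittPathAlgebra R sf rf :=
  realElem R sf rf p * ghostElem R sf rf p

theorem pathProj_mul_pathProj_eq {u w u' w' : V} (p : GPath sf rf u w) (q : GPath sf rf u' w') :
    pathProj R p * pathProj R q =
      realElem R sf rf p * (ghostElem R sf rf p * realElem R sf rf q) * ghostElem R sf rf q := by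
  simp only [pathProj, mul_assoc]

theorem pathProj_mul_of_isPrefix {u w u' w' : V} {p : GPath sf rf u w} {q : GPath sf rf u' w'}
    (h : IsPrefix R p q) :
    pathProj R p * pathProj R q = pathProj R q ∧ pathProj R q * pathProj R p = pathProj R q := by
  obtain ⟨δ, hreal, hghost⟩ := h
  have hpq : ghostElem R sf rf p * realElem R sf rf q = realElem R sf rf δ := by
    rw [hreal, ← mul_assoc, ghostElem_mul_realElem_self, vertex_mul_realElem]
  have hqp : ghostElem R sf rf q * realElem R sf rf p = ghostElem R sf rf δ := by
    rw [hghost, mul_assoc, ghostElem_mul_realElem_self, ghostElem_mul_vertex]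
  constructor
  · rw [pathProj_mul_pathProj_eq, hpq, ← hreal, pathProj]
  · rw [pathProj_mul_pathProj_eq, hqp, mul_assoc, ← hghost, pathProj]

theorem pathProj_mul_pathProj {u w u' w' : V} (p : GPath sf rf u w) (q : GPath sf rf u' w') :
    Commute (pathProj R p) (pathProj R q) ∧
      (pathProj R p * pathProj R q = 0 ∨ pathProj R p * pathProj R q = pathProj R p ∨
        pathProj R p * pathProj R q = pathProj R q) := by
  rcases ghostElem_mul_realElem_eq_zero_or_isPrefix (R := R) p q with ⟨hpq, hqp⟩ | hpq | hqp
  · have hpq' : pathProj R p * pathProj R q = 0 := by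
      rw [pathProj_mul_pathProj_eq, hpq, mul_zero, zero_mul]
    have hqp' : pathProj R q * pathProj R p = 0 := by
      rw [pathProj_mul_pathProj_eq, hqp, mul_zero, zero_mul]
    exact ⟨hpq'.trans hqp'.symm, .inl hpq'⟩
  · obtain ⟨h₁, h₂⟩ := pathProj_mul_of_isPrefix hpq
    exact ⟨h₁.trans h₂.symm, .inr (.inr h₁)⟩
  · obtain ⟨h₁, h₂⟩ := pathProj_mul_of_isPrefix hqp
    exact ⟨h₂.trans h₁.symm, .inr (.inl h₂)⟩

theorem pathProj_mul_monomial (r : R) {u u' w : V} (α : GPath sf rf u w) (β : GPath sf rf u' w) :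
    pathProj R α * (ofR R sf rf r * (realElem R sf rf α * ghostElem R sf rf β)) =
      ofR R sf rf r * (realElem R sf rf α * ghostElem R sf rf β) := by
  have hcomm := (commute_ofR_realElem r α).mul_right (commute_ofR_ghostElem r α)
  rw [pathProj, hcomm.symm.left_comm]
  congr 1
  rw [mul_assoc, ← mul_assoc (ghostElem R sf rf α),
    ghostElem_mul_realElem_self, ← mul_assoc, realElem_mul_vertex]

theorem monomial_mul_pathProj (r : R) {u u' w : V} (α : GPath sf rf u w) (β : GPath sf rf u' w) :
    ofR R sf rf r * (realElem R sf rf α * ghostElem R sf rf β) * pathProj R β =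
      ofR R sf rf r * (realElem R sf rf α * ghostElem R sf rf β) := by
  rw [pathProj, mul_assoc]
  congr 1
  rw [mul_assoc, ← mul_assoc (ghostElem R sf rf β), ghostElem_mul_realElem_self, ← mul_assoc,
    realElem_mul_vertex]

theorem monomial_mem_component {G : Type*} [Group G] (dg : Ed → G) {g : G} {u u' w : V}
    {α : GPath sf rf u w} {β : GPath sf rf u' w} (hdeg : α.degree dg * (β.degree dg)⁻¹ = g) :
    realElem R sf rf α * ghostElem R sf rf β ∈ component R sf rf dg g :=
  AddSubgroup.subset_closure ⟨1, u, u', w, α, β, hdeg, by rw [ofR_one, one_mul]⟩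

section Projections

variable (R) (sf rf) {G : Type*} [Group G] (dg : Ed → G)

def projections (g : G) : Set (LeavittPathAlgebra R sf rf) :=
  {x | ∃ (u u' w : V) (α : GPath sf rf u w) (β : GPath sf rf u' w),
    α.degree dg * (β.degree dg)⁻¹ = g ∧ x = pathProj R α}

theorem commute_of_mem_closure_projections (g : G) :
    ∀ a ∈ AddSubgroup.closure (projections R sf rf dg g),
      ∀ b ∈ AddSubgroup.closure (projections R sf rf dg g), Commute a b := by
  refine fun a ha b hb ↦ AddSubgroup.commute_of_mem_closure ?_ ha hb
  rintro _ ⟨-, -, -, p, -, -, rfl⟩ _ ⟨-, -, -, q, -, -, rfl⟩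
  exact (pathProj_mul_pathProj (R := R) p q).1

theorem mul_mem_closure_projections (g : G) :
    ∀ a ∈ AddSubgroup.closure (projections R sf rf dg g),
      ∀ b ∈ AddSubgroup.closure (projections R sf rf dg g),
        a * b ∈ AddSubgroup.closure (projections R sf rf dg g) := by
  refine fun a ha b hb ↦ AddSubgroup.mul_mem_closure ?_ ha hb
  intro x hx y hy
  have hx' := AddSubgroup.subset_closure hx
  have hy' := AddSubgroup.subset_closure hy
  obtain ⟨_, _, _, p, _, _, rfl⟩ := hx
  obtain ⟨_, _, _, q, _, _, rfl⟩ := hy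
  rcases (pathProj_mul_pathProj (R := R) p q).2 with h | h | h <;> rw [h]
  exacts [zero_mem _, hx', hy']

theorem closure_projections_le (g : G) :
    AddSubgroup.closure (projections R sf rf dg g) ≤
      sgMul (component R sf rf dg g) (component R sf rf dg g⁻¹) := by
  rw [AddSubgroup.closure_le]
  rintro _ ⟨u, u', w, α, β, hdeg, rfl⟩
  have hβα : β.degree dg * (α.degree dg)⁻¹ = g⁻¹ := by rw [← hdeg, mul_inv_rev, inv_inv]
  refine AddSubgroup.subset_closure ⟨_, monomial_mem_component dg hdeg, _,
    monomial_mem_component dg hβα, ?_⟩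
  rw [pathProj, mul_assoc, ← mul_assoc (ghostElem R sf rf β), ghostElem_mul_realElem_self,
    ← mul_assoc, realElem_mul_vertex]

end Projections

end LPA

open LPA in
/-- If `E` is a (possibly non-finite) directed graph, `R` an associative
unital ring and `G` a group, then `L_R(E)`, with any standard `G`-gradation, is nearly
epsilon-strongly `G`-graded: for every `g ∈ G` and every `s ∈ S_g` one has
`s ∈ (S_g S_{g⁻¹}) s` and `s ∈ s (S_{g⁻¹} S_g)`. -/
theorem leavitt_nearlyEpsilonStrongly (R : Type*) [Ring R] {V Ed : Type*}
    (sf rf : Ed → V) {G : Type*} [Group G] (dg : Ed → G) :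
    ∀ g : G, ∀ s ∈ component R sf rf dg g,
      (∃ t ∈ sgMul (component R sf rf dg g) (component R sf rf dg g⁻¹), t * s = s) ∧
      (∃ t ∈ sgMul (component R sf rf dg g⁻¹) (component R sf rf dg g), s * t = s) := by
  intro g s hs
  constructor
  · refine (AddSubgroup.exists_mul_left_eq_self_of_mem_closure
      (mul_mem_closure_projections R sf rf dg g) (commute_of_mem_closure_projections R sf rf dg g)
      ?_ hs).imp fun e ⟨he, hes⟩ ↦ ⟨closure_projections_le R sf rf dg g he, hes⟩
    rintro _ ⟨r, u, u', w, α, β, hdeg, rfl⟩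
    exact ⟨pathProj R α, AddSubgroup.subset_closure ⟨u, u', w, α, β, hdeg, rfl⟩,
      pathProj_mul_monomial r α β⟩
  · have hle := closure_projections_le R sf rf dg g⁻¹
    rw [inv_inv] at hle
    refine (AddSubgroup.exists_mul_right_eq_self_of_mem_closure
      (mul_mem_closure_projections R sf rf dg g⁻¹)
      (commute_of_mem_closure_projections R sf rf dg g⁻¹) ?_ hs).imp
      fun e ⟨he, hse⟩ ↦ ⟨hle he, hse⟩
    rintro _ ⟨r, u, u', w, α, β, hdeg, rfl⟩
    refine ⟨pathProj R β, AddSubgroup.subset_closure ⟨u', u, w, β, α, ?_, rfl⟩,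
      monomial_mul_pathProj r α β⟩
    rw [← hdeg, mul_inv_rev, inv_inv]
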